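/- Let $\pi \in A$ be a monic irreducible polynomial of degree $d$. Then the image of $\rho_{\pi}(X)$ under the coefficientwise reduction map $A[X] \to (A/(\pi))[X]$ equals $X^{q^d}$; equivalently, $\rho_{\pi}(X) \equiv X^{q^d} \pmod{\pi}$. -/

import Mathlib

/-!
Reduce modulo `π` into the field `K = 𝔽_q[T]/(π)`, which has `q^d` elements and is generated by
the class `t` of `T`. The reduction `f` of `ρ_π` involves only monomials `X^(q^i)`, is monic of
degree `q^d`, has `X`-coefficient `π mod π = 0`, and commutes under composition with the
reduction `tX + X^q` of `ρ_T`. Since `x^(q^d) = x` on `K`, so does `X^(q^d)`, hence also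
`D = f - X^(q^d)` (as `tX + X^q` is additive). If `D ≠ 0`, its lowest monomial is `X^(q^j)` with
`0 < j < d`, and comparing lowest coefficients in `D ∘ (tX + X^q) = (tX + X^q) ∘ D` gives
`t^(q^j) = t`. Then the `j`-th power of Frobenius fixes `K`, so `d ∣ j`, a contradiction.
-/

open Polynomial

namespace Polynomial

section Linearized

variable {R : Type*} [Semiring R] {q : ℕ} {f g : R[X]}

def IsLinearized (q : ℕ) (f : R[X]) : Prop :=
  ∀ n ∈ f.support, ∃ i, n = q ^ i

theorem isLinearized_X_pow_pow (q i : ℕ) : (X ^ q ^ i : R[X]).IsLinearized q := by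
  intro n hn
  rw [mem_support_iff, coeff_X_pow] at hn
  exact ⟨i, by_contra fun h => hn (if_neg h)⟩

theorem isLinearized_X : (X : R[X]).IsLinearized q := by
  simpa using isLinearized_X_pow_pow (R := R) q 0

theorem IsLinearized.add (hf : f.IsLinearized q) (hg : g.IsLinearized q) :
    (f + g).IsLinearized q := fun n hn =>
  (Finset.mem_union.1 (support_add hn)).elim (hf n) (hg n)

theorem IsLinearized.C_mul (hf : f.IsLinearized q) (a : R) : (C a * f).IsLinearized q := by
  rw [← smul_eq_C_mul]
  exact fun n hn => hf n (support_smul a f hn)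

theorem IsLinearized.map {S : Type*} [Semiring S] (hf : f.IsLinearized q) (φ : R →+* S) :
    (f.map φ).IsLinearized q := fun n hn => hf n (support_map_subset φ f hn)

theorem IsLinearized.coeff_zero (hf : f.IsLinearized q) (hq : q ≠ 0) : f.coeff 0 = 0 := by
  by_contra h
  obtain ⟨i, hi⟩ := hf 0 (mem_support_iff.2 h)
  exact pow_ne_zero i hq hi.symm

end Linearized

theorem IsLinearized.sub {R : Type*} [Ring R] {q : ℕ} {f g : R[X]} (hf : f.IsLinearized q)
    (hg : g.IsLinearized q) : (f - g).IsLinearized q := by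
  rw [sub_eq_add_neg]
  exact hf.add fun n hn => hg n (support_neg (p := g) ▸ hn)

section Frobenius

variable (Fq : Type*) [Field Fq] [Fintype Fq] {R : Type*} [CommRing R] [Algebra Fq R]

theorem pow_card_eq_map_expand (f : R[X]) :
    f ^ Fintype.card Fq =
      (expand R (Fintype.card Fq) f).map (FiniteField.frobeniusAlgHom Fq R) := by
  refine RingHom.congr_fun (f := (FiniteField.frobeniusAlgHom Fq R[X]).toRingHom)
    (g := (mapRingHom (FiniteField.frobeniusAlgHom Fq R).toRingHom).comp
      (expand R (Fintype.card Fq)).toRingHom) ?_ f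
  exact ringHom_ext (fun _ => by simp) (by simp)

theorem coeff_pow_card_mul (f : R[X]) (n : ℕ) :
    (f ^ Fintype.card Fq).coeff (Fintype.card Fq * n) = f.coeff n ^ Fintype.card Fq := by
  rw [pow_card_eq_map_expand, coeff_map, coeff_expand Fintype.card_pos,
    if_pos (dvd_mul_right _ _), Nat.mul_div_cancel_left _ Fintype.card_pos]
  rfl

theorem coeff_pow_card_of_not_dvd (f : R[X]) {n : ℕ} (hn : ¬ Fintype.card Fq ∣ n) :
    (f ^ Fintype.card Fq).coeff n = 0 := by
  rw [pow_card_eq_map_expand, coeff_map, coeff_expand Fintype.card_pos, if_neg hn, map_zero]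

theorem IsLinearized.pow_card {f : R[X]} (hf : f.IsLinearized (Fintype.card Fq)) :
    (f ^ Fintype.card Fq).IsLinearized (Fintype.card Fq) := by
  intro n hn
  rw [mem_support_iff] at hn
  obtain ⟨k, rfl⟩ : Fintype.card Fq ∣ n :=
    by_contra fun h => hn (coeff_pow_card_of_not_dvd Fq f h)
  rw [coeff_pow_card_mul] at hn
  obtain ⟨i, rfl⟩ :=
    hf k (mem_support_iff.2 fun h => hn (by rw [h, zero_pow Fintype.card_ne_zero]))
  exact ⟨i + 1, by rw [pow_succ']⟩

end Frobenius

theorem pow_natTrailingDegree_eq_of_comp_comm {K : Type*} [CommRing K] [IsDomain K] {q : ℕ}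
    (hq : 1 < q) {t : K} {D : K[X]} (hD : D ≠ 0) (hD0 : D.coeff 0 = 0)
    (hcomm : D.comp (C t * X + X ^ q) = (C t * X + X ^ q).comp D) :
    t ^ D.natTrailingDegree = t := by
  set n := D.natTrailingDegree
  obtain ⟨s, rfl⟩ : ∃ s, q = s + 1 := ⟨q - 1, by omega⟩
  obtain ⟨E, hE⟩ : X ^ n ∣ D := X_pow_dvd_iff.2 fun _ => coeff_eq_zero_of_lt_natTrailingDegree
  -- Both sides of `hcomm` are `X ^ n` times a polynomial; compare the values of those at `0`.
  have hDn : D.coeff n = E.eval 0 := by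
    rw [hE, ← coeff_zero_eq_eval_zero, ← coeff_X_pow_mul E n 0, zero_add]
  have hE0 : E.eval 0 ≠ 0 := hDn ▸ trailingCoeff_nonzero_iff_nonzero.2 hD
  have hn : n ≠ 0 := fun h => hE0 (by rw [← hDn, h, hD0])
  have key : (C t + X ^ s) ^ n * E.comp (C t * X + X ^ (s + 1)) =
      C t * E + X ^ (n * s) * E ^ (s + 1) := by
    refine mul_left_cancel₀ (pow_ne_zero n (X_ne_zero (R := K))) ?_
    calc X ^ n * ((C t + X ^ s) ^ n * E.comp (C t * X + X ^ (s + 1)))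
        = D.comp (C t * X + X ^ (s + 1)) := by
          rw [hE, mul_comp, X_pow_comp,
            show (C t * X + X ^ (s + 1) : K[X]) = X * (C t + X ^ s) by ring, mul_pow]
          ring
      _ = (C t * X + X ^ (s + 1)).comp D := hcomm
      _ = X ^ n * (C t * E + X ^ (n * s) * E ^ (s + 1)) := by
        rw [hE]; simp only [add_comp, mul_comp, C_comp, X_comp, X_pow_comp]; ring
  have := congrArg (eval 0) key
  have hs : s ≠ 0 := by omega
  simp only [eval_mul, eval_pow, eval_add, eval_C, eval_X, eval_comp, mul_zero, zero_pow hs,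
    zero_pow (mul_ne_zero hn hs), zero_pow (Nat.succ_ne_zero s), add_zero, zero_mul] at this
  exact mul_right_cancel₀ hE0 this

theorem IsLinearized.eq_zero_of_comp_comm {K : Type*} [CommRing K] [IsDomain K] {q d : ℕ}
    (hq : 1 < q) {t : K}
    (ht : ∀ j, t ^ q ^ j = t → d ∣ j) {D : K[X]} (hlin : D.IsLinearized q)
    (h1 : D.coeff 1 = 0) (hdeg : D.natDegree < q ^ d)
    (hcomm : D.comp (C t * X + X ^ q) = (C t * X + X ^ q).comp D) : D = 0 := by
  by_contra hD
  obtain ⟨j, hj⟩ := hlin _ (natTrailingDegree_mem_support_of_nonzero hD)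
  have htj := pow_natTrailingDegree_eq_of_comp_comm hq hD (hlin.coeff_zero (by omega)) hcomm
  obtain ⟨k, rfl⟩ := ht j (hj ▸ htj)
  have hk : k ≠ 0 := by
    rintro rfl
    rw [mul_zero, pow_zero] at hj
    exact trailingCoeff_nonzero_iff_nonzero.2 hD (by rw [trailingCoeff, hj, h1])
  have hlt : q ^ (d * k) < q ^ d := hj ▸ (natTrailingDegree_le_natDegree D).trans_lt hdeg
  exact hlt.not_ge
    (Nat.pow_le_pow_right (by omega) (Nat.le_mul_of_pos_right d (Nat.pos_of_ne_zero hk)))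

theorem IsMonicOfDegree.map {R S : Type*} [Semiring R] [Semiring S] [Nontrivial S] {f : R[X]}
    {n : ℕ} (hf : IsMonicOfDegree f n) (φ : R →+* S) : IsMonicOfDegree (f.map φ) n :=
  ⟨hf.monic.natDegree_map φ ▸ hf.natDegree_eq, hf.monic.map φ⟩

end Polynomial

theorem FiniteField.X_pow_card_comp {K : Type*} [Field K] [Fintype K] (f : K[X]) :
    (X ^ Fintype.card K).comp f = f.comp (X ^ Fintype.card K) := by
  rw [X_pow_comp, ← FiniteField.expand_card, expand_eq_comp_X_pow]

theorem sub_X_pow_card_comp_comm {Fq K : Type*} [Field Fq] [Fintype Fq] [Field K] [Fintype K]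
    [Algebra Fq K] {t : K} {f : K[X]}
    (h : f.comp (C t * X + X ^ Fintype.card Fq) = (C t * X + X ^ Fintype.card Fq).comp f) :
    (f - X ^ Fintype.card K).comp (C t * X + X ^ Fintype.card Fq) =
      (C t * X + X ^ Fintype.card Fq).comp (f - X ^ Fintype.card K) := by
  have hfrob : (f - X ^ Fintype.card K) ^ Fintype.card Fq =
      f ^ Fintype.card Fq - (X ^ Fintype.card K) ^ Fintype.card Fq :=
    map_sub (FiniteField.frobeniusAlgHom Fq K[X]) f _
  rw [sub_comp, h, FiniteField.X_pow_card_comp]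
  simp only [add_comp, mul_comp, C_comp, X_comp, X_pow_comp, hfrob]
  ring

instance AdjoinRoot.moduleFinite {K : Type*} [Field K] {f : K[X]} [Fact (Irreducible f)] :
    Module.Finite K (AdjoinRoot f) :=
  (powerBasis (Fact.out : Irreducible f).ne_zero).finite

theorem AdjoinRoot.finrank_eq_natDegree {K : Type*} [Field K] {f : K[X]} (hf : f ≠ 0) :
    Module.finrank K (AdjoinRoot f) = f.natDegree :=
  (powerBasis hf).finrank.trans (powerBasis_dim hf)

theorem AdjoinRoot.natDegree_dvd_of_root_pow_card_pow_eq {Fq : Type*} [Field Fq] [Fintype Fq]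
    {f : Fq[X]} [Fact (Irreducible f)] {j : ℕ} (h : root f ^ Fintype.card Fq ^ j = root f) :
    f.natDegree ∣ j := by
  have := Module.finite_of_finite Fq (M := AdjoinRoot f)
  rw [← finrank_eq_natDegree (Fact.out : Irreducible f).ne_zero,
    ← FiniteField.orderOf_frobeniusAlgHom Fq (AdjoinRoot f)]
  refine orderOf_dvd_of_pow_eq_one (algHom_ext ?_)
  rw [AlgHom.coe_pow, FiniteField.coe_frobeniusAlgHom, pow_iterate]
  exact h

structure IsCarlitzModule {Fq : Type*} [Field Fq] [Fintype Fq] (ρ : Fq[X] → Fq[X][X]) :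
    Prop where
  map_C : ∀ c : Fq, ρ (C c) = C (C c) * X
  map_X : ρ X = C X * X + X ^ Fintype.card Fq
  map_add : ∀ a b, ρ (a + b) = ρ a + ρ b
  map_mul : ∀ a b, ρ (a * b) = (ρ a).comp (ρ b)

namespace IsCarlitzModule

variable {Fq : Type*} [Field Fq] [Fintype Fq] {ρ : Fq[X] → Fq[X][X]}

theorem map_C_mul (hρ : IsCarlitzModule ρ) (c : Fq) (a : Fq[X]) :
    ρ (C c * a) = C (C c) * ρ a := by
  rw [hρ.map_mul, hρ.map_C, mul_comp, C_comp, X_comp]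

theorem map_X_mul (hρ : IsCarlitzModule ρ) (a : Fq[X]) :
    ρ (X * a) = C X * ρ a + ρ a ^ Fintype.card Fq := by
  rw [hρ.map_mul, hρ.map_X, add_comp, mul_comp, C_comp, X_comp, X_pow_comp]

theorem map_comp_comm (hρ : IsCarlitzModule ρ) {S : Type*} [CommRing S] (φ : Fq[X] →+* S)
    (a b : Fq[X]) :
    ((ρ a).map φ).comp ((ρ b).map φ) = ((ρ b).map φ).comp ((ρ a).map φ) := by
  rw [← Polynomial.map_comp, ← Polynomial.map_comp, ← hρ.map_mul, ← hρ.map_mul, mul_comm]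

theorem isLinearized (hρ : IsCarlitzModule ρ) (a : Fq[X]) :
    (ρ a).IsLinearized (Fintype.card Fq) := by
  induction a using Polynomial.induction_on with
  | C c => rw [hρ.map_C]; exact isLinearized_X.C_mul _
  | add a b ha hb => rw [hρ.map_add]; exact ha.add hb
  | monomial n c ih =>
    rw [show C c * X ^ (n + 1) = X * (C c * X ^ n) by ring, hρ.map_X_mul]
    exact (ih.C_mul _).add (ih.pow_card Fq)

theorem coeff_one (hρ : IsCarlitzModule ρ) (a : Fq[X]) : (ρ a).coeff 1 = a := by
  induction a using Polynomial.induction_on with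
  | C c => simp [hρ.map_C]
  | add a b ha hb => rw [hρ.map_add, coeff_add, ha, hb]
  | monomial n c ih =>
    have h : ¬ Fintype.card Fq ∣ 1 := fun h => Fintype.one_lt_card.ne' (Nat.dvd_one.1 h)
    rw [show C c * X ^ (n + 1) = X * (C c * X ^ n) by ring, hρ.map_X_mul, coeff_add, coeff_C_mul,
      ih, coeff_pow_card_of_not_dvd Fq _ h, add_zero]

theorem isMonicOfDegree_map_X (hρ : IsCarlitzModule ρ) :
    IsMonicOfDegree (ρ X) (Fintype.card Fq) :=
  hρ.map_X ▸ (isMonicOfDegree_X_pow _ _).add_left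
    ((natDegree_C_mul_le _ _).trans_lt (natDegree_X.trans_lt Fintype.one_lt_card))

theorem isMonicOfDegree_map_X_pow (hρ : IsCarlitzModule ρ) (n : ℕ) :
    IsMonicOfDegree (ρ (X ^ n)) (Fintype.card Fq ^ n) := by
  induction n with
  | zero =>
    rw [pow_zero, pow_zero, ← C_1, hρ.map_C, C_1, C_1, one_mul]
    exact isMonicOfDegree_X _
  | succ n ih =>
    rw [pow_succ, pow_succ, hρ.map_mul]
    exact ih.comp Fintype.card_ne_zero hρ.isMonicOfDegree_map_X

theorem natDegree_map_le (hρ : IsCarlitzModule ρ) (a : Fq[X]) :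
    (ρ a).natDegree ≤ Fintype.card Fq ^ a.natDegree := by
  refine induction_with_natDegree_le (fun a => (ρ a).natDegree ≤ Fintype.card Fq ^ a.natDegree)
    a.natDegree ?_ ?_ ?_ a le_rfl
  · rw [← C_0, hρ.map_C]; simp
  · intro n r hr _
    rw [hρ.map_C_mul, natDegree_C_mul_X_pow n r hr]
    exact (natDegree_C_mul_le _ _).trans (hρ.isMonicOfDegree_map_X_pow n).natDegree_eq.le
  · intro f g hfg _ hf hg
    rw [hρ.map_add, natDegree_add_eq_right_of_natDegree_lt hfg]
    exact (natDegree_add_le _ _).trans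
      (max_le (hf.trans (Nat.pow_le_pow_right Fintype.card_pos hfg.le)) hg)

theorem isMonicOfDegree_map (hρ : IsCarlitzModule ρ) {a : Fq[X]} {n : ℕ}
    (ha : IsMonicOfDegree a n) : IsMonicOfDegree (ρ a) (Fintype.card Fq ^ n) := by
  rcases eq_or_ne n 0 with rfl | hn
  · simpa [isMonicOfDegree_zero_iff.1 ha] using hρ.isMonicOfDegree_map_X_pow 0
  obtain ⟨r, rfl, hr⟩ := ha.exists_natDegree_lt hn
  rw [hρ.map_add]
  exact (hρ.isMonicOfDegree_map_X_pow n).add_right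
    ((hρ.natDegree_map_le r).trans_lt (Nat.pow_lt_pow_right Fintype.one_lt_card hr))

end IsCarlitzModule

/-- Let `A = 𝔽_q[T]` and let `ρ : A → A[X]` be the Carlitz module, determined by
`ρ_c(X) = cX` for constants `c`, `ρ_T(X) = TX + X^q`, additivity, and `ρ_{ab} = ρ_a ∘ ρ_b`.
For `π ∈ A` monic irreducible of degree `d`, the image of `ρ_π(X)` under the
coefficientwise reduction `A[X] → (A/(π))[X]` equals `X^(q^d)`, i.e.
`ρ_π(X) ≡ X^(q^d) (mod π)`. -/
theorem carlitz_mod_pi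
    (Fq : Type) [Field Fq] [Fintype Fq]
    (ρ : Polynomial Fq → Polynomial (Polynomial Fq))
    (hρC : ∀ c : Fq, ρ (Polynomial.C c) = Polynomial.C (Polynomial.C c) * Polynomial.X)
    (hρT : ρ Polynomial.X =
      Polynomial.C Polynomial.X * Polynomial.X + Polynomial.X ^ Fintype.card Fq)
    (hρadd : ∀ a b : Polynomial Fq, ρ (a + b) = ρ a + ρ b)
    (hρmul : ∀ a b : Polynomial Fq, ρ (a * b) = (ρ a).comp (ρ b))
    (π : Polynomial Fq) (hπmonic : π.Monic) (hπirr : Irreducible π) :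
    (ρ π).map (Ideal.Quotient.mk (Ideal.span {π})) =
      Polynomial.X ^ (Fintype.card Fq ^ π.natDegree) := by
  have hρ : IsCarlitzModule ρ := ⟨hρC, hρT, hρadd, hρmul⟩
  have : Fact (Irreducible π) := ⟨hπirr⟩
  have : Finite (AdjoinRoot π) := Module.finite_of_finite Fq
  let _ := Fintype.ofFinite (AdjoinRoot π)
  have hcard : Fintype.card (AdjoinRoot π) = Fintype.card Fq ^ π.natDegree := by
    rw [Module.card_eq_pow_finrank (K := Fq), AdjoinRoot.finrank_eq_natDegree hπirr.ne_zero]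
  have hT : (ρ X).map (AdjoinRoot.mk π) = C (AdjoinRoot.root π) * X + X ^ Fintype.card Fq := by
    simp [hρT]
  have hdeg := (hρ.isMonicOfDegree_map ⟨rfl, hπmonic⟩).map (AdjoinRoot.mk π)
  have hqd : 1 < Fintype.card Fq ^ π.natDegree :=
    Nat.one_lt_pow hπirr.natDegree_pos.ne' Fintype.one_lt_card
  change (ρ π).map (AdjoinRoot.mk π) =
    (X ^ (Fintype.card Fq ^ π.natDegree) : (AdjoinRoot π)[X])
  rw [← sub_eq_zero]
  refine (((hρ.isLinearized π).map _).sub (isLinearized_X_pow_pow _ _)).eq_zero_of_comp_comm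
    Fintype.one_lt_card (fun _ => AdjoinRoot.natDegree_dvd_of_root_pow_card_pow_eq) ?_
    (hdeg.natDegree_sub_X_pow (by omega)) ?_
  · rw [coeff_sub, coeff_map, hρ.coeff_one, AdjoinRoot.mk_self, coeff_X_pow, if_neg hqd.ne,
      sub_zero]
  · rw [← hcard]
    exact sub_X_pow_card_comp_comm (hT ▸ hρ.map_comp_comm _ π X)
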